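/- arXiv:2508.06618 — 2 statements merged into one kernel-verified Lean document; each statement's English description precedes it below -/
import Mathlib

section
/- There exist real numbers h, k, p, q satisfying the system of equations h² + k² = 4, p² + (q − k + 1)² = 1, q² + (p + h − 1)² = 1, (p − h/2)² + (q + k/2)² = 1, and moreover satisfying the bounds 1.133 < h < 1.134, 1.647 < k < 1.648, 0.857 < p < 0.858, 0.133 < q < 0.134. -/
set_option maxHeartbeats 4000000


noncomputable section

theorem system_has_solution :
    ∃ h k p q : ℝ,
      h ^ 2 + k ^ 2 = 4 ∧
      p ^ 2 + (q - k + 1) ^ 2 = 1 ∧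
      q ^ 2 + (p + h - 1) ^ 2 = 1 ∧
      (p - h / 2) ^ 2 + (q + k / 2) ^ 2 = 1 ∧
      1.133 < h ∧ h < 1.134 ∧
      1.647 < k ∧ k < 1.648 ∧
      0.857 < p ∧ p < 0.858 ∧
      0.133 < q ∧ q < 0.134 := by
  obtain ⟨h, hmem, hf⟩ :
      ∃ h ∈ Set.Icc (1.13369 : ℝ) 1.1337,
        (512 - 736*h + 512*h^2 - 8*h^3 - 128*h^4 + 32*h^5) + (-256 + 368*h - 248*h^2 + 32*h^4) * Real.sqrt (4 - h ^ 2) = 0 := by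
    have hcont : ContinuousOn (fun x : ℝ =>
        (512 - 736*x + 512*x^2 - 8*x^3 - 128*x^4 + 32*x^5) + (-256 + 368*x - 248*x^2 + 32*x^4) * Real.sqrt (4 - x ^ 2))
        (Set.Icc (1.13369 : ℝ) 1.1337) := by fun_prop
    have hsub := intermediate_value_Icc' (by norm_num : (1.13369:ℝ) ≤ 1.1337) hcont
    have hbne : (0:ℝ) ∈ Set.Icc
        ((512 - 736*(1.1337:ℝ) + 512*(1.1337:ℝ)^2 - 8*(1.1337:ℝ)^3 - 128*(1.1337:ℝ)^4 + 32*(1.1337:ℝ)^5) + (-256 + 368*(1.1337:ℝ) - 248*(1.1337:ℝ)^2 + 32*(1.1337:ℝ)^4) * Real.sqrt (4 - (1.1337:ℝ) ^ 2))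
        ((512 - 736*(1.13369:ℝ) + 512*(1.13369:ℝ)^2 - 8*(1.13369:ℝ)^3 - 128*(1.13369:ℝ)^4 + 32*(1.13369:ℝ)^5) + (-256 + 368*(1.13369:ℝ) - 248*(1.13369:ℝ)^2 + 32*(1.13369:ℝ)^4) * Real.sqrt (4 - (1.13369:ℝ) ^ 2)) := by
      constructor
      · set s := Real.sqrt (4 - (1.1337:ℝ) ^ 2) with hs
        have hs0 : 0 ≤ s := Real.sqrt_nonneg _
        have hs2 : s ^ 2 = 4 - (1.1337:ℝ) ^ 2 := Real.sq_sqrt (by norm_num)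
        have h1 : ((512 - 736*(1.1337:ℝ) + 512*(1.1337:ℝ)^2 - 8*(1.1337:ℝ)^3 - 128*(1.1337:ℝ)^4 + 32*(1.1337:ℝ)^5))^2 < ((-256 + 368*(1.1337:ℝ) - 248*(1.1337:ℝ)^2 + 32*(1.1337:ℝ)^4))^2 * s^2 := by
          rw [hs2]; norm_num
        have h2 : (0:ℝ) < (512 - 736*(1.1337:ℝ) + 512*(1.1337:ℝ)^2 - 8*(1.1337:ℝ)^3 - 128*(1.1337:ℝ)^4 + 32*(1.1337:ℝ)^5) - (-256 + 368*(1.1337:ℝ) - 248*(1.1337:ℝ)^2 + 32*(1.1337:ℝ)^4) * s := by nlinarith [hs0]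
        nlinarith [h1, h2]
      · set s := Real.sqrt (4 - (1.13369:ℝ) ^ 2) with hs
        have hs0 : 0 ≤ s := Real.sqrt_nonneg _
        have hs2 : s ^ 2 = 4 - (1.13369:ℝ) ^ 2 := Real.sq_sqrt (by norm_num)
        have h1 : ((-256 + 368*(1.13369:ℝ) - 248*(1.13369:ℝ)^2 + 32*(1.13369:ℝ)^4))^2 * s^2 < ((512 - 736*(1.13369:ℝ) + 512*(1.13369:ℝ)^2 - 8*(1.13369:ℝ)^3 - 128*(1.13369:ℝ)^4 + 32*(1.13369:ℝ)^5))^2 := by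
          rw [hs2]; norm_num
        have hA : (0:ℝ) < (512 - 736*(1.13369:ℝ) + 512*(1.13369:ℝ)^2 - 8*(1.13369:ℝ)^3 - 128*(1.13369:ℝ)^4 + 32*(1.13369:ℝ)^5) := by norm_num
        nlinarith [h1, hA, hs0]
    obtain ⟨x, hx, hfx⟩ := hsub hbne
    exact ⟨x, hx, hfx⟩
  obtain ⟨hlo, hhi⟩ := hmem
  set k := Real.sqrt (4 - h ^ 2) with hkdef
  have hk0 : 0 ≤ k := Real.sqrt_nonneg _
  have hk2 : k ^ 2 = 4 - h ^ 2 := Real.sq_sqrt (by nlinarith)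
  have klo : (1.647642:ℝ) < k := by nlinarith [hk2, hk0]
  have khi : k < (1.647649:ℝ) := by nlinarith [hk2, hk0]
  have hD : (0:ℝ) < (8*h*k - 6*h - 6*k + 4) := by nlinarith [mul_nonneg (by linarith : (0:ℝ) ≤ h - 1.13369) (by linarith : (0:ℝ) ≤ k - 1.647642)]
  have hDne : (8*h*k - 6*h - 6*k + 4) ≠ 0 := ne_of_gt hD
  have hp : ((-8 - 4*h + 4*h^2 + (4 + 6*h - 4*h^2)*k) / (8*h*k - 6*h - 6*k + 4)) * (8*h*k - 6*h - 6*k + 4) = (-8 - 4*h + 4*h^2 + (4 + 6*h - 4*h^2)*k) := div_mul_cancel₀ _ hDne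
  have hq : ((-8 + 12*h + 4*h^2 - 4*h^3 + (4 - 6*h)*k) / (8*h*k - 6*h - 6*k + 4)) * (8*h*k - 6*h - 6*k + 4) = (-8 + 12*h + 4*h^2 - 4*h^3 + (4 - 6*h)*k) := div_mul_cancel₀ _ hDne
  have ea : (h * ((-8 - 4*h + 4*h^2 + (4 + 6*h - 4*h^2)*k) / (8*h*k - 6*h - 6*k + 4)) + (2 - 3*k) * ((-8 + 12*h + 4*h^2 - 4*h^3 + (4 - 6*h)*k) / (8*h*k - 6*h - 6*k + 4)) - (2*k - k^2)) * (8*h*k - 6*h - 6*k + 4) = 0 := by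
    linear_combination h * hp + (2 - 3*k) * hq + (4 - 4*h + (-6 + 8*h)*k) * hk2
  have eb : ((3*h - 2) * ((-8 - 4*h + 4*h^2 + (4 + 6*h - 4*h^2)*k) / (8*h*k - 6*h - 6*k + 4)) - k * ((-8 + 12*h + 4*h^2 - 4*h^3 + (4 - 6*h)*k) / (8*h*k - 6*h - 6*k + 4)) - (2*h - h^2)) * (8*h*k - 6*h - 6*k + 4) = 0 := by
    linear_combination (3*h - 2) * hp + (-k) * hq + (6*h - 4) * hk2
  have eS : (((-8 - 4*h + 4*h^2 + (4 + 6*h - 4*h^2)*k) / (8*h*k - 6*h - 6*k + 4))^2 + ((-8 + 12*h + 4*h^2 - 4*h^3 + (4 - 6*h)*k) / (8*h*k - 6*h - 6*k + 4))^2 - (((-8 - 4*h + 4*h^2 + (4 + 6*h - 4*h^2)*k) / (8*h*k - 6*h - 6*k + 4))*h - ((-8 + 12*h + 4*h^2 - 4*h^3 + (4 - 6*h)*k) / (8*h*k - 6*h - 6*k + 4))*k)) * (8*h*k - 6*h - 6*k + 4)^2 = 0 := by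
    linear_combination (((-8 - 4*h + 4*h^2 + (4 + 6*h - 4*h^2)*k) / (8*h*k - 6*h - 6*k + 4))*(8*h*k - 6*h - 6*k + 4) + (-8 - 4*h + 4*h^2 + (4 + 6*h - 4*h^2)*k) - h*(8*h*k - 6*h - 6*k + 4)) * hp + (((-8 + 12*h + 4*h^2 - 4*h^3 + (4 - 6*h)*k) / (8*h*k - 6*h - 6*k + 4))*(8*h*k - 6*h - 6*k + 4) + (-8 + 12*h + 4*h^2 - 4*h^3 + (4 - 6*h)*k) + k*(8*h*k - 6*h - 6*k + 4)) * hq + hf + (96 - 160*h + 152*h^2 - 64*h^3 + 16*h^4 + (-24 + 68*h - 48*h^2)*k) * hk2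
  have ha : h * ((-8 - 4*h + 4*h^2 + (4 + 6*h - 4*h^2)*k) / (8*h*k - 6*h - 6*k + 4)) + (2 - 3*k) * ((-8 + 12*h + 4*h^2 - 4*h^3 + (4 - 6*h)*k) / (8*h*k - 6*h - 6*k + 4)) - (2*k - k^2) = 0 :=
    (mul_eq_zero.mp ea).resolve_right hDne
  have hb : (3*h - 2) * ((-8 - 4*h + 4*h^2 + (4 + 6*h - 4*h^2)*k) / (8*h*k - 6*h - 6*k + 4)) - k * ((-8 + 12*h + 4*h^2 - 4*h^3 + (4 - 6*h)*k) / (8*h*k - 6*h - 6*k + 4)) - (2*h - h^2) = 0 :=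
    (mul_eq_zero.mp eb).resolve_right hDne
  have hS : ((-8 - 4*h + 4*h^2 + (4 + 6*h - 4*h^2)*k) / (8*h*k - 6*h - 6*k + 4))^2 + ((-8 + 12*h + 4*h^2 - 4*h^3 + (4 - 6*h)*k) / (8*h*k - 6*h - 6*k + 4))^2 - (((-8 - 4*h + 4*h^2 + (4 + 6*h - 4*h^2)*k) / (8*h*k - 6*h - 6*k + 4))*h - ((-8 + 12*h + 4*h^2 - 4*h^3 + (4 - 6*h)*k) / (8*h*k - 6*h - 6*k + 4))*k) = 0 :=
    (mul_eq_zero.mp eS).resolve_right (pow_ne_zero 2 hDne)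
  refine ⟨h, k, ((-8 - 4*h + 4*h^2 + (4 + 6*h - 4*h^2)*k) / (8*h*k - 6*h - 6*k + 4)), ((-8 + 12*h + 4*h^2 - 4*h^3 + (4 - 6*h)*k) / (8*h*k - 6*h - 6*k + 4)), by linear_combination hk2, by linear_combination hS + ha,
    by linear_combination hS + hb, by linear_combination hS + (1/4 : ℝ) * hk2,
    by norm_num; linarith, by norm_num; linarith, by norm_num; linarith, by norm_num; linarith,
    ?_, ?_, ?_, ?_⟩
  · rw [show (0.857:ℝ) = 857/1000 by norm_num, div_lt_div_iff₀ (by norm_num) hD]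
    nlinarith [mul_nonneg (by linarith : (0:ℝ) ≤ h - 1.13369) (by linarith : (0:ℝ) ≤ k - 1.647642),
      mul_nonneg (by linarith : (0:ℝ) ≤ 1.1337 - h) (by linarith : (0:ℝ) ≤ 1.647649 - k),
      mul_nonneg (by linarith : (0:ℝ) ≤ h - 1.13369) (by linarith : (0:ℝ) ≤ 1.647649 - k),
      mul_nonneg (by linarith : (0:ℝ) ≤ 1.1337 - h) (by linarith : (0:ℝ) ≤ k - 1.647642),
      mul_nonneg (mul_nonneg (by linarith : (0:ℝ) ≤ h - 1.13369) (by linarith : (0:ℝ) ≤ h - 1.13369)) (by linarith : (0:ℝ) ≤ h),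
      sq_nonneg (h - 1.13369), sq_nonneg (1.1337 - h)]
  · rw [show (0.858:ℝ) = 858/1000 by norm_num, div_lt_div_iff₀ hD (by norm_num)]
    nlinarith [mul_nonneg (by linarith : (0:ℝ) ≤ h - 1.13369) (by linarith : (0:ℝ) ≤ k - 1.647642),
      mul_nonneg (by linarith : (0:ℝ) ≤ 1.1337 - h) (by linarith : (0:ℝ) ≤ 1.647649 - k),
      mul_nonneg (by linarith : (0:ℝ) ≤ h - 1.13369) (by linarith : (0:ℝ) ≤ 1.647649 - k),
      mul_nonneg (by linarith : (0:ℝ) ≤ 1.1337 - h) (by linarith : (0:ℝ) ≤ k - 1.647642),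
      mul_nonneg (mul_nonneg (by linarith : (0:ℝ) ≤ h - 1.13369) (by linarith : (0:ℝ) ≤ h - 1.13369)) (by linarith : (0:ℝ) ≤ h),
      sq_nonneg (h - 1.13369), sq_nonneg (1.1337 - h)]
  · rw [show (0.133:ℝ) = 133/1000 by norm_num, div_lt_div_iff₀ (by norm_num) hD]
    nlinarith [mul_nonneg (by linarith : (0:ℝ) ≤ h - 1.13369) (by linarith : (0:ℝ) ≤ k - 1.647642),
      mul_nonneg (by linarith : (0:ℝ) ≤ 1.1337 - h) (by linarith : (0:ℝ) ≤ 1.647649 - k),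
      mul_nonneg (by linarith : (0:ℝ) ≤ h - 1.13369) (by linarith : (0:ℝ) ≤ 1.647649 - k),
      mul_nonneg (by linarith : (0:ℝ) ≤ 1.1337 - h) (by linarith : (0:ℝ) ≤ k - 1.647642),
      mul_nonneg (mul_nonneg (by linarith : (0:ℝ) ≤ h - 1.13369) (by linarith : (0:ℝ) ≤ h - 1.13369)) (by linarith : (0:ℝ) ≤ h),
      sq_nonneg (h - 1.13369), sq_nonneg (1.1337 - h)]
  · rw [show (0.134:ℝ) = 134/1000 by norm_num, div_lt_div_iff₀ hD (by norm_num)]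
    nlinarith [mul_nonneg (by linarith : (0:ℝ) ≤ h - 1.13369) (by linarith : (0:ℝ) ≤ k - 1.647642),
      mul_nonneg (by linarith : (0:ℝ) ≤ 1.1337 - h) (by linarith : (0:ℝ) ≤ 1.647649 - k),
      mul_nonneg (by linarith : (0:ℝ) ≤ h - 1.13369) (by linarith : (0:ℝ) ≤ 1.647649 - k),
      mul_nonneg (by linarith : (0:ℝ) ≤ 1.1337 - h) (by linarith : (0:ℝ) ≤ k - 1.647642),
      mul_nonneg (mul_nonneg (by linarith : (0:ℝ) ≤ h - 1.13369) (by linarith : (0:ℝ) ≤ h - 1.13369)) (by linarith : (0:ℝ) ≤ h),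
      sq_nonneg (h - 1.13369), sq_nonneg (1.1337 - h)]
end
end

section
/- Let h, k, p, q be real numbers satisfying p² + (q − k + 1)² = 1 and q² + (p + h − 1)² = 1, and let F : {0,…,15} → ℝ² be the coordinate assignment of Table 2. Then for every i = 0,…,7, the Euclidean distance between F(8 + i) and F(8 + ((i+3) mod 8)) equals 1; that is, all eight inner edges of GP(8,3) are represented by unit-length segments. -/
noncomputable section

def pt (x y : ℝ) : EuclideanSpace ℝ (Fin 2) := (WithLp.equiv 2 (Fin 2 → ℝ)).symm ![x, y]

def tableF (h k p q : ℝ) : Fin 16 → EuclideanSpace ℝ (Fin 2) :=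
  ![pt 0 k, pt (-(h/2)) (k/2), pt (-h) 0, pt (-(h/2)) (-(k/2)),
    pt 0 (-k), pt (h/2) (-(k/2)), pt h 0, pt (h/2) (k/2),
    pt 0 (k-1), pt (-p) (-q), pt (1-h) 0, pt (-p) q,
    pt 0 (1-k), pt p q, pt (h-1) 0, pt p (-q)]

theorem inner_edges_unit (h k p q : ℝ)
    (h2 : p ^ 2 + (q - k + 1) ^ 2 = 1)
    (h3 : q ^ 2 + (p + h - 1) ^ 2 = 1) :
    ∀ i : ℕ, (hi : i < 8) →
      dist (tableF h k p q ⟨8 + i, by omega⟩)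
        (tableF h k p q ⟨8 + (i + 3) % 8, by omega⟩) = 1 := by
  have key : ∀ a b c d : ℝ, (a-c)^2 + (b-d)^2 = 1 → dist (pt a b) (pt c d) = 1 := by
    intro a b c d hsum
    rw [EuclideanSpace.dist_eq]
    have : ∑ x : Fin 2, dist (pt a b x) (pt c d x) ^ 2 = (a-c)^2 + (b-d)^2 := by
      simp [Fin.sum_univ_two, pt, Real.dist_eq, sq_abs]
    rw [this, hsum, Real.sqrt_one]
  intro i hi
  interval_cases i <;>
    simp only [tableF] <;>
    norm_num [Matrix.cons_val_succ, Matrix.cons_val_zero, Matrix.cons_val_one] <;>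
    apply key <;> nlinarith [sq_nonneg p, sq_nonneg q]
end
end
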